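/- For Rule 37 and Rule 45 on a ring of size n, the two rules have exactly the same set of parallel fixed points, namely the three rotations of (001)^{n/3} when 3 divides n, and no fixed points otherwise. -/

import Mathlib

/-- Single-cell update: replace the state of cell `i` by the local rule applied
to its neighborhood on the ring `ZMod n`. -/
def eupdate (n : ℕ) (f : Bool → Bool → Bool → Bool) (x : ZMod n → Bool) (i : ZMod n) :
    ZMod n → Bool :=
  Function.update x i (f (x (i - 1)) (x i) (x (i + 1)))

/-- Synchronous (parallel) step. -/
def parStep (n : ℕ) (f : Bool → Bool → Bool → Bool) (x : ZMod n → Bool) : ZMod n → Bool :=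
  fun i => f (x (i - 1)) (x i) (x (i + 1))

/-- `x` is a fixed point of the parallel dynamics. -/
def IsFixedConfig (n : ℕ) (f : Bool → Bool → Bool → Bool) (x : ZMod n → Bool) : Prop :=
  ∀ i : ZMod n, f (x (i - 1)) (x i) (x (i + 1)) = x i

/-- One full sequential step under the sequential update mode `μ`
(a permutation of the cells): update cells one at a time in the order
`μ 0, μ 1, …, μ (n-1)`. -/
def seqStep (n : ℕ) (f : Bool → Bool → Bool → Bool) (μ : Fin n ≃ ZMod n)
    (x : ZMod n → Bool) : ZMod n → Bool :=
  (List.finRange n).foldl (fun y k => eupdate n f y (μ k)) x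

/-- One full sequential step under the descending order `(n-1, n-2, …, 0)`. -/
def seqStepDesc (n : ℕ) (f : Bool → Bool → Bool → Bool) (x : ZMod n → Bool) : ZMod n → Bool :=
  ((List.range n).reverse).foldl (fun y k => eupdate n f y (k : ZMod n)) x

/-- One full sequential step under the ascending order `(0, 1, …, n-1)`. -/
def seqStepAsc (n : ℕ) (f : Bool → Bool → Bool → Bool) (x : ZMod n → Bool) : ZMod n → Bool :=
  (List.range n).foldl (fun y k => eupdate n f y (k : ZMod n)) x

def rule37 : Bool → Bool → Bool → Bool
  | true, true, true => false
  | true, true, false => false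
  | true, false, true => true
  | true, false, false => false
  | false, true, true => false
  | false, true, false => true
  | false, false, true => false
  | false, false, false => true

def rule45 : Bool → Bool → Bool → Bool
  | true, true, true => false
  | true, true, false => false
  | true, false, true => true
  | true, false, false => false
  | false, true, true => true
  | false, true, false => true
  | false, false, true => false
  | false, false, false => true

/-! At a fixed point of Rule 37 every window `x (i - 1), x i, x (i + 1)` is `100`, `010` or `001`.
Rule 45 fixes `011` as well, but then the next window starts with `11`, which neither rule fixes.
Two overlapping windows of Rule 37 force `x (i + 3) = x i`. If `3 ∤ n`, then `3` is a unit of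
`ZMod n`, so a fixed point would be constant, and no constant configuration is fixed. If `3 ∣ n`,
a `3`-periodic configuration factors through `ZMod n → ZMod 3`, where the fixed points are
enumerated. -/

open Function

theorem rule45_eq_self_of_rule37_eq_self {a b c : Bool} (h : rule37 a b c = b) :
    rule45 a b c = b := by
  decide +revert

theorem rule37_eq_self_of_rule45_eq_self {a b c d : Bool} (h : rule45 a b c = b)
    (h' : rule45 b c d = c) : rule37 a b c = b := by
  decide +revert

theorem eq_of_rule37_eq_self_of_rule37_eq_self {a b c d : Bool} (h : rule37 a b c = b)
    (h' : rule37 b c d = c) : d = a := by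
  decide +revert

theorem rule37_self_ne (a : Bool) : rule37 a a a ≠ a := by
  decide +revert

theorem isFixedConfig_three_rule37_iff (y : ZMod 3 → Bool) :
    IsFixedConfig 3 rule37 y ↔ ∃ k : ZMod 3, y = fun t => decide (t + k = 2) := by
  revert y
  unfold IsFixedConfig
  decide

theorem isFixedConfig_comp_ringHom {m n : ℕ} {f : Bool → Bool → Bool → Bool}
    (φ : ZMod n →+* ZMod m) (y : ZMod m → Bool) :
    IsFixedConfig n f (y ∘ φ) ↔ IsFixedConfig m f y := by
  refine ⟨fun h t => ?_, fun h i => ?_⟩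
  · obtain ⟨i, rfl⟩ := ZMod.ringHom_surjective φ t
    simpa using h i
  · simpa using h (φ i)

theorem Function.Periodic.eq_comp_castHom {n d : ℕ} [NeZero n] {α : Type*} {x : ZMod n → α}
    (hx : Periodic x (d : ZMod n)) (hd : d ∣ n) :
    x = (fun t : ZMod d => x t.val) ∘ ZMod.castHom hd (ZMod d) := by
  funext i
  simp only [comp_apply, ZMod.castHom_apply, ZMod.cast_eq_val, ZMod.val_natCast]
  conv_lhs => rw [← ZMod.natCast_zmod_val i, ← Nat.mod_add_div i.val d]
  push_cast
  rw [mul_comm]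
  exact hx.nat_mul _ _

theorem Function.Periodic.periodic_one_of_isUnit {n : ℕ} {α : Type*} {x : ZMod n → α}
    {c : ZMod n} (hx : Periodic x c) (hc : IsUnit c) : Periodic x 1 := by
  obtain ⟨b, hb⟩ := hc.exists_left_inv
  rw [← hb, ← ZMod.intCast_zmod_cast b]
  exact hx.int_mul _

theorem ZMod.castHom_add_natCast_eq_natCast_iff {n d : ℕ} [NeZero n] (hd : d ∣ n) (i : ZMod n)
    (k : ℕ) {r : ℕ} (hr : r < d) :
    ZMod.castHom hd (ZMod d) i + k = r ↔ (i.val + k) % d = r := by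
  rw [ZMod.castHom_apply, ZMod.cast_eq_val, ← Nat.cast_add, ZMod.natCast_eq_natCast_iff',
    Nat.mod_eq_of_lt hr]

namespace IsFixedConfig

variable {n : ℕ} {x : ZMod n → Bool}

theorem rule45_iff_rule37 : IsFixedConfig n rule45 x ↔ IsFixedConfig n rule37 x := by
  refine ⟨fun h i => ?_, fun h i => rule45_eq_self_of_rule37_eq_self (h i)⟩
  refine rule37_eq_self_of_rule45_eq_self (h i) (d := x (i + 1 + 1)) ?_
  simpa using h (i + 1)

theorem periodic_rule37 (h : IsFixedConfig n rule37 x) : Periodic x 3 := by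
  intro i
  have h₁ := h (i + 1)
  have h₂ := h (i + 1 + 1)
  simp only [add_sub_cancel_right] at h₁ h₂
  rw [show i + 3 = i + 1 + 1 + 1 by ring]
  exact eq_of_rule37_eq_self_of_rule37_eq_self h₁ h₂

theorem three_dvd_of_rule37 (h : IsFixedConfig n rule37 x) : 3 ∣ n := by
  by_contra h3
  have hunit : IsUnit (3 : ZMod n) := by
    simpa using ZMod.isUnit_prime_of_not_dvd Nat.prime_three h3
  have hconst := h.periodic_rule37.periodic_one_of_isUnit hunit
  have h₀ := h 0
  rw [← hconst (0 - 1), sub_add_cancel, hconst 0] at h₀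
  exact rule37_self_ne (x 0) h₀

end IsFixedConfig

theorem rule37_rule45_same_fixed_points (n : ℕ) (hn : 0 < n) (x : ZMod n → Bool) :
    (IsFixedConfig n rule37 x ↔ IsFixedConfig n rule45 x) ∧
    (IsFixedConfig n rule37 x ↔
      (3 ∣ n ∧ ∃ k < 3, ∀ i : ZMod n, x i = decide ((i.val + k) % 3 = 2))) := by
  have : NeZero n := ⟨hn.ne'⟩
  have pattern (h3 : 3 ∣ n) (i : ZMod n) (k : ℕ) :
      decide (ZMod.castHom h3 (ZMod 3) i + k = 2) = decide ((i.val + k) % 3 = 2) :=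
    decide_eq_decide.2 (ZMod.castHom_add_natCast_eq_natCast_iff h3 i k (r := 2) (by norm_num))
  refine ⟨IsFixedConfig.rule45_iff_rule37.symm, fun h => ?_, fun ⟨h3, k, _, hx⟩ => ?_⟩
  · have h3 := h.three_dvd_of_rule37
    have hx := h.periodic_rule37.eq_comp_castHom (d := 3) h3
    rw [hx, isFixedConfig_comp_ringHom, isFixedConfig_three_rule37_iff] at h
    obtain ⟨k, hk⟩ := h
    refine ⟨h3, k.val, k.val_lt, fun i => ?_⟩
    rw [hx, hk, comp_apply, ← pattern h3, ZMod.natCast_zmod_val]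
  · have hx : x = (fun t : ZMod 3 => decide (t + k = 2)) ∘ ZMod.castHom h3 (ZMod 3) :=
      funext fun i => (hx i).trans (pattern h3 i k).symm
    rw [hx, isFixedConfig_comp_ringHom, isFixedConfig_three_rule37_iff]
    exact ⟨k, rfl⟩
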